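/- arXiv:2511.12626 — 3 statements merged into one kernel-verified Lean document; each statement's English description precedes it below -/
import Mathlib

section
/- For the logarithmic random-value function with parameter λ, if λ > 1/r_min (with r_min > 0), then for every N ≥ 2 the expected difference between the highest and second-highest of N i.i.d. draws is strictly less than r_min. -/
open MeasureTheory ProbabilityTheory

/-- The maximum of finitely many real values. -/
noncomputable def maxOf {N : ℕ} (v : Fin N → ℝ) : ℝ := ⨆ i, v i

/-- The second-largest of finitely many real values. -/
noncomputable def secondMaxOf {N : ℕ} (v : Fin N → ℝ) : ℝ :=
  ⨅ i, ⨆ j : {j : Fin N // j ≠ i}, v j.1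

/-- The distribution of the logarithmic random-value function
`RV_log = r_min - (1/λ) ln(1 - U)` with `U` uniform on `[0,1)`. -/
noncomputable def logRVDist (rmin lam : ℝ) : Measure ℝ :=
  (volume.restrict (Set.Ico (0 : ℝ) 1)).map (fun u => rmin - (1 / lam) * Real.log (1 - u))

/-! Writing `Mᵢ` for the largest of the draws other than `Xᵢ`, the gap between the two largest
draws is `∑ᵢ (Xᵢ - Mᵢ)⁺`, and the events `{Mᵢ < Xᵢ}` are pairwise disjoint. Since `Xᵢ` is
independent of `Mᵢ ≥ r_min` and `Xᵢ - r_min` is exponential with rate `λ`, memorylessness gives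
`E[(Xᵢ - Mᵢ)⁺] = P(Mᵢ < Xᵢ) / λ`. Summing, the expected gap is at most `1/λ < r_min`. -/

open Set

noncomputable def maxExcept {ι : Type*} (v : ι → ℝ) (i : ι) : ℝ :=
  ⨆ j : {j : ι // j ≠ i}, v j.1

section maxExcept

variable {ι : Type*} (v : ι → ℝ)

lemma le_maxExcept [Finite ι] {i j : ι} (hji : j ≠ i) : v j ≤ maxExcept v i :=
  le_ciSup (f := fun k : {k : ι // k ≠ i} => v k.1) (Finite.bddAbove_range _) ⟨j, hji⟩

lemma maxExcept_le {i : ι} {b : ℝ} [Nonempty {j : ι // j ≠ i}] (h : ∀ j, v j ≤ b) :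
    maxExcept v i ≤ b :=
  ciSup_le fun j => h j.1

lemma eq_of_maxExcept_lt [Finite ι] {i j : ι} (hi : maxExcept v i < v i)
    (hj : maxExcept v j < v j) : i = j := by
  by_contra hij
  linarith [le_maxExcept v hij, le_maxExcept v (Ne.symm hij)]

lemma measurable_maxExcept [Finite ι] {Ω : Type*} [MeasurableSpace Ω] {X : ι → Ω → ℝ}
    (hX : ∀ i, Measurable (X i)) (i : ι) : Measurable fun ω => maxExcept (X · ω) i := by
  have := Fintype.ofFinite ι
  exact Measurable.iSup fun j => hX j.1

end maxExcept

lemma maxOf_sub_secondMaxOf_eq_sum {N : ℕ} (hN : 2 ≤ N) (v : Fin N → ℝ) :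
    maxOf v - secondMaxOf v = ∑ i, max (v i - maxExcept v i) 0 := by
  have : Nontrivial (Fin N) := Fin.nontrivial_iff_two_le.mpr hN
  have : ∀ i : Fin N, Nonempty {j : Fin N // j ≠ i} := fun i =>
    let ⟨j, hj⟩ := exists_ne i; ⟨⟨j, hj⟩⟩
  obtain ⟨i₀, hi₀⟩ := Finite.exists_max v
  have hle : ∀ i, maxExcept v i ≤ v i₀ := fun i => maxExcept_le v hi₀
  have heq : ∀ i ≠ i₀, maxExcept v i = v i₀ := fun i hi =>
    (hle i).antisymm (le_maxExcept v hi.symm)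
  have hmax : maxOf v = v i₀ :=
    (ciSup_le hi₀).antisymm (le_ciSup (Finite.bddAbove_range v) i₀)
  have hsecond : secondMaxOf v = maxExcept v i₀ := by
    refine (ciInf_le (Finite.bddBelow_range _) i₀).antisymm (le_ciInf fun i => ?_)
    rcases eq_or_ne i i₀ with rfl | hi
    · exact le_rfl
    · exact (hle i₀).trans_eq (heq i hi).symm
  have hsum : ∑ i, max (v i - maxExcept v i) 0 = v i₀ - maxExcept v i₀ := by
    rw [Finset.sum_eq_single i₀ (fun i _ hi => ?_) (fun h => absurd (Finset.mem_univ i₀) h),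
      max_eq_left (sub_nonneg.mpr (hle i₀))]
    rw [heq i hi, max_eq_right (by linarith [hi₀ i])]
  rw [hmax, hsecond, hsum]

lemma ProbabilityTheory.iIndepFun.indepFun_maxExcept {ι Ω : Type*} [Finite ι]
    [MeasurableSpace Ω] {μ : Measure Ω} {X : ι → Ω → ℝ} (hindep : iIndepFun X μ)
    (hX : ∀ i, Measurable (X i)) (i : ι) :
    IndepFun (fun ω => maxExcept (X · ω) i) (X i) μ := by
  classical
  have := Fintype.ofFinite ι
  have hsplit := hindep.indepFun_finset {i}ᶜ {i} disjoint_compl_left hX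
  have hrest : Measurable fun v : ({i}ᶜ : Finset ι) → ℝ =>
      ⨆ j : {j : ι // j ≠ i}, v ⟨j.1, by simpa using j.2⟩ :=
    Measurable.iSup fun j => measurable_pi_apply _
  exact hsplit.comp hrest (measurable_pi_apply ⟨i, Finset.mem_singleton_self i⟩)

lemma lintegral_exp_neg_mul_Ioi {lam : ℝ} (hlam : 0 < lam) :
    ∫⁻ t in Ioi (0 : ℝ), ENNReal.ofReal (Real.exp (-(lam * t))) = ENNReal.ofReal (1 / lam) := by
  have hint : IntegrableOn (fun t : ℝ => Real.exp (-(lam * t))) (Ioi 0) := by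
    simpa only [neg_mul] using exp_neg_integrableOn_Ioi 0 hlam
  rw [← ofReal_integral_eq_lintegral_ofReal hint (ae_of_all _ fun t => (Real.exp_pos _).le),
    integral_comp_mul_left_Ioi (fun x => Real.exp (-x)) 0 hlam, mul_zero,
    integral_exp_neg_Ioi_zero, smul_eq_mul, mul_one, one_div]

/-- Memorylessness of the exponential distribution. -/
lemma lintegral_posPart_sub_of_exp_tail {ν : Measure ℝ} {c lam : ℝ} (hlam : 0 < lam)
    (htail : ∀ z, c ≤ z → ν (Ioi z) = ENNReal.ofReal (Real.exp (-(lam * (z - c)))))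
    {y : ℝ} (hy : c ≤ y) :
    ∫⁻ x, ENNReal.ofReal (max (x - y) 0) ∂ν = ENNReal.ofReal (1 / lam) * ν (Ioi y) := by
  have hlevel : ∀ t ∈ Ioi (0 : ℝ), ν {x | t < max (x - y) 0}
      = ν (Ioi y) * ENNReal.ofReal (Real.exp (-(lam * t))) := fun t ht => by
    have hset : {x : ℝ | t < max (x - y) 0} = Ioi (y + t) := by
      ext x
      simp only [mem_ofPred_eq, mem_Ioi, lt_max_iff]
      constructor
      · rintro (h | h) <;> linarith [mem_Ioi.mp ht]
      · intro h; left; linarith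
    rw [hset, htail _ (by linarith [mem_Ioi.mp ht]), htail y hy,
      ← ENNReal.ofReal_mul (Real.exp_pos _).le, ← Real.exp_add]
    ring_nf
  rw [lintegral_eq_lintegral_meas_lt (f := fun x => max (x - y) 0) ν
      (ae_of_all _ fun x => le_max_right _ _) (by fun_prop),
    setLIntegral_congr_fun measurableSet_Ioi hlevel, lintegral_const_mul _ (by fun_prop),
    lintegral_exp_neg_mul_Ioi hlam, mul_comm]

lemma lintegral_posPart_sub_of_indepFun {Ω : Type*} [MeasurableSpace Ω] {μ : Measure Ω}
    [IsFiniteMeasure μ] {Y Z : Ω → ℝ} (hY : Measurable Y) (hZ : Measurable Z)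
    (hind : IndepFun Y Z μ) {c : ℝ} {a : ENNReal} (hYc : ∀ᵐ ω ∂μ, c ≤ Y ω)
    (hover : ∀ y, c ≤ y → ∫⁻ x, ENNReal.ofReal (max (x - y) 0) ∂(μ.map Z)
      = a * μ.map Z (Ioi y)) :
    ∫⁻ ω, ENNReal.ofReal (max (Z ω - Y ω) 0) ∂μ = a * μ {ω | Y ω < Z ω} := by
  have hjoint : μ.map (fun ω => (Y ω, Z ω)) = (μ.map Y).prod (μ.map Z) :=
    (indepFun_iff_map_prod_eq_prod_map_map hY.aemeasurable hZ.aemeasurable).mp hind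
  have hlt : MeasurableSet {p : ℝ × ℝ | p.1 < p.2} :=
    measurableSet_lt measurable_fst measurable_snd
  have hF : Measurable fun p : ℝ × ℝ => ENNReal.ofReal (max (p.2 - p.1) 0) := by fun_prop
  have hYc' : ∀ᵐ y ∂μ.map Y, c ≤ y := (ae_map_iff hY.aemeasurable measurableSet_Ici).mpr hYc
  calc ∫⁻ ω, ENNReal.ofReal (max (Z ω - Y ω) 0) ∂μ
      = ∫⁻ y, ∫⁻ x, ENNReal.ofReal (max (x - y) 0) ∂μ.map Z ∂μ.map Y := by
        rw [← lintegral_prod _ hF.aemeasurable, ← hjoint, lintegral_map hF (hY.prodMk hZ)]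
    _ = ∫⁻ y, a * μ.map Z (Ioi y) ∂μ.map Y := lintegral_congr_ae (hYc'.mono hover)
    _ = a * ((μ.map Y).prod (μ.map Z)) {p | p.1 < p.2} := by
        rw [Measure.prod_apply hlt, ← lintegral_const_mul _ (measurable_measure_prodMk_left hlt)]
        rfl
    _ = a * μ {ω | Y ω < Z ω} := by
        rw [← hjoint, Measure.map_apply (hY.prodMk hZ) hlt]
        rfl

lemma measurable_logRV (rmin lam : ℝ) :
    Measurable fun u : ℝ => rmin - (1 / lam) * Real.log (1 - u) := by
  fun_prop

section logRVDist

variable {rmin lam : ℝ}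

lemma ae_le_logRVDist (hlam : 0 ≤ lam) : ∀ᵐ x ∂logRVDist rmin lam, rmin ≤ x := by
  rw [logRVDist, ae_map_iff (measurable_logRV rmin lam).aemeasurable measurableSet_Ici]
  refine ae_restrict_of_forall_mem measurableSet_Ico fun u hu => ?_
  have : Real.log (1 - u) ≤ 0 := Real.log_nonpos (by linarith [hu.2]) (by linarith [hu.1])
  have : 0 ≤ 1 / lam := by positivity
  nlinarith

lemma logRVDist_Ioi (hlam : 0 < lam) {z : ℝ} (hz : rmin ≤ z) :
    logRVDist rmin lam (Ioi z) = ENNReal.ofReal (Real.exp (-(lam * (z - rmin)))) := by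
  have hexp : Real.exp (-(lam * (z - rmin))) ≤ 1 := Real.exp_le_one_iff.mpr (by nlinarith)
  have hlevel : ∀ u < 1, z < rmin - 1 / lam * Real.log (1 - u) ↔
      1 - Real.exp (-(lam * (z - rmin))) < u := fun u hu => by
    rw [lt_sub_comm, one_div_mul_eq_div, div_lt_iff₀ hlam,
      Real.log_lt_iff_lt_exp (by linarith), sub_lt_comm]
    ring_nf
  have hpre : (fun u : ℝ => rmin - (1 / lam) * Real.log (1 - u)) ⁻¹' Ioi z ∩ Ico 0 1
      = Ioo (1 - Real.exp (-(lam * (z - rmin)))) 1 := by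
    ext u
    simp only [mem_inter_iff, mem_preimage, mem_Ioi, mem_Ico, mem_Ioo]
    constructor
    · rintro ⟨h, -, hu1⟩
      exact ⟨(hlevel u hu1).1 h, hu1⟩
    · rintro ⟨h, hu1⟩
      exact ⟨(hlevel u hu1).2 h, by linarith, hu1⟩
  rw [logRVDist, Measure.map_apply (measurable_logRV rmin lam) measurableSet_Ioi,
    Measure.restrict_apply (measurable_logRV rmin lam measurableSet_Ioi), hpre, Real.volume_Ioo]
  ring_nf

end logRVDist

lemma lintegral_maxOf_sub_secondMaxOf_le {Ω : Type*} [MeasurableSpace Ω] (μ : Measure Ω)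
    [IsProbabilityMeasure μ] {rmin lam : ℝ} (hlam : 0 < lam) {N : ℕ} (hN : 2 ≤ N)
    {X : Fin N → Ω → ℝ} (hmeas : ∀ i, Measurable (X i)) (hindep : iIndepFun X μ)
    (hdist : ∀ i, μ.map (X i) = logRVDist rmin lam) :
    ∫⁻ ω, ENNReal.ofReal (maxOf (X · ω) - secondMaxOf (X · ω)) ∂μ ≤ ENNReal.ofReal (1 / lam) := by
  set M : Fin N → Ω → ℝ := fun i ω => maxExcept (X · ω) i
  set A : Fin N → Set Ω := fun i => {ω | M i ω < X i ω}
  have hX_ge : ∀ i, ∀ᵐ ω ∂μ, rmin ≤ X i ω := fun i =>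
    ae_of_ae_map (hmeas i).aemeasurable ((hdist i).symm ▸ ae_le_logRVDist hlam.le)
  have hM_ge : ∀ i, ∀ᵐ ω ∂μ, rmin ≤ M i ω := fun i => by
    have : Nontrivial (Fin N) := Fin.nontrivial_iff_two_le.mpr hN
    obtain ⟨j, hji⟩ := exists_ne i
    exact (hX_ge j).mono fun ω hω => hω.trans (le_maxExcept (X · ω) hji)
  have hterm : ∀ i, ∫⁻ ω, ENNReal.ofReal (max (X i ω - M i ω) 0) ∂μ
      = ENNReal.ofReal (1 / lam) * μ (A i) := fun i =>
    lintegral_posPart_sub_of_indepFun (measurable_maxExcept hmeas i) (hmeas i)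
      (hindep.indepFun_maxExcept hmeas i) (hM_ge i) fun y hy => by
        rw [hdist i]
        exact lintegral_posPart_sub_of_exp_tail hlam (fun z hz => logRVDist_Ioi hlam hz) hy
  have hdisj : Pairwise (Function.onFun Disjoint A) := fun i j hij =>
    disjoint_left.mpr fun ω hi hj => hij (eq_of_maxExcept_lt (X · ω) hi hj)
  have hA : ∀ i, MeasurableSet (A i) := fun i =>
    measurableSet_lt (measurable_maxExcept hmeas i) (hmeas i)
  calc ∫⁻ ω, ENNReal.ofReal (maxOf (X · ω) - secondMaxOf (X · ω)) ∂μ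
      = ∑ i, ∫⁻ ω, ENNReal.ofReal (max (X i ω - M i ω) 0) ∂μ := by
        simp_rw [maxOf_sub_secondMaxOf_eq_sum hN,
          ENNReal.ofReal_sum_of_nonneg fun i _ => le_max_right _ (0 : ℝ)]
        exact lintegral_finsetSum _ fun i _ => by
          have := measurable_maxExcept hmeas i
          fun_prop
    _ = ENNReal.ofReal (1 / lam) * μ (⋃ i, A i) := by
        simp_rw [hterm, ← Finset.mul_sum, measure_iUnion hdisj hA, tsum_fintype]
    _ ≤ ENNReal.ofReal (1 / lam) := mul_le_of_le_one_right' prob_le_one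

/-- For the logarithmic random-value function with parameter `λ`, if `λ > 1/r_min`
(with `r_min > 0`), then for every `N ≥ 2` the expected difference between the highest
and second-highest of `N` i.i.d. draws is strictly less than `r_min`
(Skipping Resistance). -/
theorem log_value_function_skipping_resistance
    {Ω : Type*} [MeasurableSpace Ω] (μ : Measure Ω) [IsProbabilityMeasure μ]
    (rmin lam : ℝ) (hrmin : 0 < rmin) (hlam : 1 / rmin < lam)
    (N : ℕ) (hN : 2 ≤ N)
    (X : Fin N → Ω → ℝ) (hmeas : ∀ i, Measurable (X i))
    (hindep : iIndepFun X μ)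
    (hdist : ∀ i, μ.map (X i) = logRVDist rmin lam) :
    ∫ ω, (maxOf (fun i => X i ω) - secondMaxOf (fun i => X i ω)) ∂μ < rmin := by
  have hlam0 : 0 < lam := (one_div_pos.mpr hrmin).trans hlam
  have hgap_nonneg : ∀ ω, 0 ≤ maxOf (X · ω) - secondMaxOf (X · ω) := fun ω => by
    rw [maxOf_sub_secondMaxOf_eq_sum hN]
    exact Finset.sum_nonneg fun i _ => le_max_right _ _
  have hgap_meas : Measurable fun ω => maxOf (X · ω) - secondMaxOf (X · ω) :=
    (Measurable.iSup hmeas).sub (Measurable.iInf (measurable_maxExcept hmeas))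
  calc ∫ ω, (maxOf (X · ω) - secondMaxOf (X · ω)) ∂μ
      = (∫⁻ ω, ENNReal.ofReal (maxOf (X · ω) - secondMaxOf (X · ω)) ∂μ).toReal :=
        integral_eq_lintegral_of_nonneg_ae (ae_of_all _ hgap_nonneg)
          hgap_meas.aestronglyMeasurable
    _ ≤ (ENNReal.ofReal (1 / lam)).toReal := ENNReal.toReal_mono ENNReal.ofReal_ne_top
        (lintegral_maxOf_sub_secondMaxOf_le μ hlam0 hN hmeas hindep hdist)
    _ = 1 / lam := ENNReal.toReal_ofReal (one_div_pos.mpr hlam0).le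
    _ < rmin := (one_div_lt hlam0 hrmin).mpr hlam
end

section
/- For integers 1 ≤ N ≤ N_max and 0 < p ≤ 1/N_max, if r_max < (1 + 1/(N_max·p·(1-p)^{N_max-1}))·r_min with r_min > 0 and r_max > r_min, then N·p·(1-p)^{N-1}·(r_max - r_min) < r_min. -/
private lemma psr_step (p : ℝ) (Nmax k : ℕ) (hk1 : 1 ≤ k) (hk : k + 1 ≤ Nmax)
    (hp0 : 0 < p) (hp : p ≤ 1 / (Nmax : ℝ)) :
    (k : ℝ) * p * (1 - p) ^ (k - 1) ≤ ((k + 1 : ℕ) : ℝ) * p * (1 - p) ^ ((k + 1) - 1) := by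
  have hNpos : (0 : ℝ) < (Nmax : ℝ) := by
    exact_mod_cast Nat.lt_of_lt_of_le (by omega) hk
  have hkp : ((k : ℝ) + 1) * p ≤ 1 := by
    have h1 : ((k : ℝ) + 1) ≤ (Nmax : ℝ) := by exact_mod_cast hk
    have h2 : ((k : ℝ) + 1) * p ≤ (Nmax : ℝ) * p :=
      mul_le_mul_of_nonneg_right h1 hp0.le
    have h3 : (Nmax : ℝ) * p ≤ (Nmax : ℝ) * (1 / Nmax) :=
      mul_le_mul_of_nonneg_left hp hNpos.le
    have h4 : (Nmax : ℝ) * (1 / Nmax) = 1 := by field_simp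
    linarith
  have hq : 0 ≤ 1 - p := by
    nlinarith
  have hpow : (1 - p) ^ ((k + 1) - 1) = (1 - p) * (1 - p) ^ (k - 1) := by
    have : (k + 1) - 1 = (k - 1) + 1 := by omega
    rw [this, pow_succ]; ring
  rw [hpow]
  have key : (k : ℝ) ≤ ((k : ℝ) + 1) * (1 - p) := by nlinarith
  push_cast
  have hppow : 0 ≤ p * (1 - p) ^ (k - 1) := mul_nonneg hp0.le (pow_nonneg hq _)
  calc (k : ℝ) * p * (1 - p) ^ (k - 1) = (k : ℝ) * (p * (1 - p) ^ (k - 1)) := by ring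
    _ ≤ (((k : ℝ) + 1) * (1 - p)) * (p * (1 - p) ^ (k - 1)) :=
        mul_le_mul_of_nonneg_right key hppow
    _ = ((k : ℝ) + 1) * p * ((1 - p) * (1 - p) ^ (k - 1)) := by ring

private lemma psr_mono (p : ℝ) (Nmax N M : ℕ) (hN1 : 1 ≤ N) (hNM : N ≤ M) (hM : M ≤ Nmax)
    (hp0 : 0 < p) (hp : p ≤ 1 / (Nmax : ℝ)) :
    (N : ℝ) * p * (1 - p) ^ (N - 1) ≤ (M : ℝ) * p * (1 - p) ^ (M - 1) := by
  induction M with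
  | zero => omega
  | succ m ih =>
    rcases Nat.lt_or_ge N (m + 1) with h | h
    · have hm1 : 1 ≤ m := by omega
      have := ih (by omega) (by omega)
      calc (N : ℝ) * p * (1 - p) ^ (N - 1) ≤ (m : ℝ) * p * (1 - p) ^ (m - 1) := this
        _ ≤ ((m + 1 : ℕ) : ℝ) * p * (1 - p) ^ ((m + 1) - 1) :=
            psr_step p Nmax m hm1 hM hp0 hp
    · have : N = m + 1 := by omega
      subst this; rfl

/-- Skipping Resistance condition for the polarized random-value function:
for integers `1 ≤ N ≤ N_max` and `0 < p ≤ 1/N_max`, if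
`r_max < (1 + 1/(N_max·p·(1-p)^{N_max-1}))·r_min` with `0 < r_min < r_max`, then
`N·p·(1-p)^{N-1}·(r_max - r_min) < r_min`. -/
theorem polarized_skipping_resistance
    (p rmin rmax : ℝ) (Nmax N : ℕ) (hN1 : 1 ≤ N) (hNN : N ≤ Nmax)
    (hp0 : 0 < p) (hp : p ≤ 1 / (Nmax : ℝ))
    (hrmin : 0 < rmin) (hr : rmin < rmax)
    (hcond : rmax < (1 + 1 / ((Nmax : ℝ) * p * (1 - p) ^ (Nmax - 1))) * rmin) :
    (N : ℝ) * p * (1 - p) ^ (N - 1) * (rmax - rmin) < rmin := by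
  have hNmax1 : 1 ≤ Nmax := le_trans hN1 hNN
  have hNpos : (0 : ℝ) < (Nmax : ℝ) := by exact_mod_cast hNmax1
  have hq : 0 ≤ 1 - p := by
    have : (Nmax : ℝ) * p ≤ 1 := by
      have h3 : (Nmax : ℝ) * p ≤ (Nmax : ℝ) * (1 / Nmax) :=
        mul_le_mul_of_nonneg_left hp hNpos.le
      have h4 : (Nmax : ℝ) * (1 / Nmax) = 1 := by field_simp
      linarith
    nlinarith [hNpos, hp0, mul_le_mul_of_nonneg_right (show (1:ℝ) ≤ (Nmax:ℝ) by exact_mod_cast hNmax1) hp0.le]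
  have hDpos : 0 < (Nmax : ℝ) * p * (1 - p) ^ (Nmax - 1) := by
    rcases Nat.eq_or_lt_of_le hNmax1 with h1 | h2
    · rw [← h1]; norm_num; exact hp0
    · have : p < 1 := by
        have h2' : (2 : ℝ) ≤ (Nmax : ℝ) := by exact_mod_cast h2
        have : (1 : ℝ) / Nmax ≤ 1 / 2 := by
          apply div_le_div_of_nonneg_left <;> linarith
        linarith
      exact mul_pos (mul_pos hNpos hp0) (pow_pos (by linarith) _)
  set D := (Nmax : ℝ) * p * (1 - p) ^ (Nmax - 1) with hD
  have hmono : (N : ℝ) * p * (1 - p) ^ (N - 1) ≤ D :=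
    psr_mono p Nmax N Nmax hN1 hNN le_rfl hp0 hp
  have hkey : D * (rmax - rmin) < rmin := by
    have : rmax - rmin < rmin / D := by
      have h1 : (1 + 1 / D) * rmin = rmin + rmin / D := by ring
      linarith [hcond.trans_eq h1]
    calc D * (rmax - rmin) < D * (rmin / D) :=
          mul_lt_mul_of_pos_left this hDpos
      _ = rmin := by field_simp
  calc (N : ℝ) * p * (1 - p) ^ (N - 1) * (rmax - rmin) ≤ D * (rmax - rmin) :=
        mul_le_mul_of_nonneg_right hmono (by linarith)
    _ < rmin := hkey
end

section
/- Suppose each of N reports independently has an equal chance of attaining the unique maximum value, and the expected total publisher reward is R(N) where R is nondecreasing in N. If a publisher owns m of the N reports and may instead publish only k ≤ m of them (so N' = N - m + k reports are published in total), then her expected reward (k/N')·R(N') is maximized at k = m. -/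
/-- Suppose each of `N` reports independently has an equal chance of attaining the
unique maximum value, and the expected total publisher reward `R N` is nonnegative and
nondecreasing in `N`. If a publisher owns `m` of the `N` reports and instead publishes
only `k ≤ m` of them (so `N' = N - m + k` reports are published in total), then her
expected reward `(k/N')·R(N')` is maximized at `k = m`:
`(k/(N-m+k))·R(N-m+k) ≤ (m/N)·R(N)`. -/
theorem publish_all_reports_maximizes_expected_reward
    (R : ℕ → ℝ) (hR0 : ∀ n, 0 ≤ R n) (hRmono : Monotone R)
    (N m k : ℕ) (hk : 1 ≤ k) (hkm : k ≤ m) (hmN : m ≤ N) :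
    ((k : ℝ) / ((N - m + k : ℕ) : ℝ)) * R (N - m + k) ≤ ((m : ℝ) / (N : ℝ)) * R N := by
  have hN' : 1 ≤ N - m + k := le_trans hk (Nat.le_add_left _ _)
  have hNle : N - m + k ≤ N := by omega
  have hNpos : (0:ℝ) < N := by
    exact_mod_cast Nat.lt_of_lt_of_le (by omega : 0 < N - m + k) hNle
  have hN'pos : (0:ℝ) < ((N - m + k : ℕ) : ℝ) := by exact_mod_cast hN'
  have hfrac : (k : ℝ) / ((N - m + k : ℕ) : ℝ) ≤ (m : ℝ) / (N : ℝ) := by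
    rw [div_le_div_iff₀ hN'pos hNpos]
    have : (k * N : ℕ) ≤ m * (N - m + k) := by nlinarith [Nat.sub_add_cancel hmN]
    exact_mod_cast this
  exact mul_le_mul hfrac (hRmono hNle) (hR0 _)
    (div_nonneg (Nat.cast_nonneg _) (le_of_lt hNpos))
end
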